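/- The ht-index of the n-level Koch hierarchy equals n: repeated head/tail breaks on {4^(k-1) copies of (1/3)^k : k = 1..n} performs exactly n-1 splits. -/

import Mathlib

/-!
The mean of `S (n + 1)` lies between its two smallest sizes, `(1/3)^(n+1) ≤ mean < (1/3)^n`
(the lower bound is `3^(n+2) ≤ 2·4^(n+1) + 1`), so one head/tail break strips exactly the
smallest level: `headOf (S (n + 1)) = S n`. Hence `i` breaks turn `S n` into `S (n - i)`, which
still contains the two distinct sizes `1/3` and `1/9` while `n - i ≥ 2`, and `S 1 = {1/3}`.
-/

/-- Triangle-size multiset of the n-iteration Koch curve. -/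
def S (n : ℕ) : Multiset ℚ :=
  (Finset.Icc 1 n).sum (fun k => Multiset.replicate (4 ^ (k - 1)) ((1 / 3 : ℚ) ^ k))

/-- Arithmetic mean of a finite multiset of rationals. -/
def msMean (s : Multiset ℚ) : ℚ := s.sum / s.card

/-- One head/tail break: keep elements strictly above the mean. -/
def headOf (s : Multiset ℚ) : Multiset ℚ := s.filter (fun x => msMean s < x)

lemma Multiset.filter_add_replicate_of_forall {α : Type*} (p : α → Prop) [DecidablePred p]
    {s : Multiset α} {a : α} (hs : ∀ x ∈ s, p x) (ha : ¬ p a) (c : ℕ) :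
    (s + Multiset.replicate c a).filter p = s := by
  rw [Multiset.filter_add, Multiset.filter_eq_self.mpr hs,
    Multiset.filter_eq_nil.mpr fun x hx => Multiset.eq_of_mem_replicate hx ▸ ha, add_zero]

lemma S_zero : S 0 = 0 := rfl

lemma S_succ (n : ℕ) : S (n + 1) = S n + Multiset.replicate (4 ^ n) ((1 / 3 : ℚ) ^ (n + 1)) := by
  rw [S, Finset.sum_Icc_succ_top (Nat.le_add_left 1 n), Nat.add_sub_cancel]
  rfl

lemma S_one : S 1 = {1 / 3} := by
  simp [S_succ, S_zero, Multiset.replicate_one]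

lemma mem_S {n : ℕ} {x : ℚ} : x ∈ S n ↔ ∃ k ∈ Finset.Icc 1 n, x = (1 / 3) ^ k := by
  simp only [S, Multiset.mem_sum, Multiset.mem_replicate]
  exact exists_congr fun k => and_congr_right fun _ => and_iff_right (by positivity)

lemma le_of_mem_S {n : ℕ} {x : ℚ} (hx : x ∈ S n) : (1 / 3) ^ n ≤ x := by
  obtain ⟨k, hk, rfl⟩ := mem_S.mp hx
  exact pow_le_pow_of_le_one (by norm_num) (by norm_num) (Finset.mem_Icc.mp hk).2

lemma card_S (n : ℕ) : (Multiset.card (S n) : ℚ) = (4 ^ n - 1) / 3 := by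
  induction n with
  | zero => simp [S_zero]
  | succ n ih =>
    rw [S_succ, Multiset.card_add, Multiset.card_replicate]
    push_cast
    rw [ih]
    ring

lemma sum_S (n : ℕ) : (S n).sum = (4 / 3) ^ n - 1 := by
  induction n with
  | zero => simp [S_zero]
  | succ n ih =>
    rw [S_succ, Multiset.sum_add, Multiset.sum_replicate, ih, nsmul_eq_mul]
    push_cast
    simp only [div_pow, one_pow]
    field_simp
    ring

lemma msMean_S (n : ℕ) : msMean (S n) = 3 * ((4 / 3) ^ n - 1) / (4 ^ n - 1) := by
  rw [msMean, sum_S, card_S]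
  field_simp

lemma three_pow_succ_le (n : ℕ) : 3 ^ (n + 1) ≤ 2 * 4 ^ n + 1 := by
  induction n with
  | zero => norm_num
  | succ n ih => rw [pow_succ, pow_succ]; omega

lemma msMean_S_succ_lt (n : ℕ) : msMean (S (n + 1)) < (1 / 3) ^ n := by
  have h3 : (1 : ℚ) < 3 ^ (n + 1) := one_lt_pow₀ (by norm_num) n.succ_ne_zero
  have h34 : (3 : ℚ) ^ (n + 1) < 4 ^ (n + 1) :=
    pow_lt_pow_left₀ (by norm_num) (by norm_num) n.succ_ne_zero
  rw [msMean_S, div_lt_iff₀ (by linarith), div_pow, one_div_pow, pow_succ (3 : ℚ)]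
  rw [pow_succ (3 : ℚ)] at h3 h34
  field_simp
  nlinarith

lemma le_msMean_S_succ (n : ℕ) : (1 / 3) ^ (n + 1) ≤ msMean (S (n + 1)) := by
  have h4 : (1 : ℚ) < 4 ^ (n + 1) := one_lt_pow₀ (by norm_num) n.succ_ne_zero
  have key : (3 : ℚ) ^ (n + 1) * 3 ≤ 2 * 4 ^ (n + 1) + 1 := by
    exact_mod_cast three_pow_succ_le (n + 1)
  rw [msMean_S, le_div_iff₀ (by linarith), one_div_pow, div_pow]
  field_simp
  linarith

lemma headOf_S_succ (n : ℕ) : headOf (S (n + 1)) = S n := by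
  have hlt := msMean_S_succ_lt n
  have hle := le_msMean_S_succ n
  unfold headOf
  generalize msMean (S (n + 1)) = μ at hlt hle ⊢
  rw [S_succ]
  exact Multiset.filter_add_replicate_of_forall _
    (fun x hx => hlt.trans_le (le_of_mem_S hx)) hle.not_gt _

lemma headOf_S (n : ℕ) : headOf (S n) = S (n - 1) := by
  cases n with
  | zero => exact Multiset.filter_zero _
  | succ n => exact headOf_S_succ n

lemma iterate_headOf_S (i n : ℕ) : headOf^[i] (S n) = S (n - i) := by
  induction i with
  | zero => rfl
  | succ i ih => rw [Function.iterate_succ_apply', ih, headOf_S, Nat.sub_sub]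

lemma two_le_card_dedup_S {n : ℕ} (hn : 2 ≤ n) : 2 ≤ (S n).dedup.card := by
  have h1 : (1 / 3 : ℚ) ^ 1 ∈ S n := mem_S.mpr ⟨1, Finset.mem_Icc.mpr ⟨le_rfl, by omega⟩, rfl⟩
  have h2 : (1 / 3 : ℚ) ^ 2 ∈ S n := mem_S.mpr ⟨2, Finset.mem_Icc.mpr ⟨by omega, hn⟩, rfl⟩
  rw [← Multiset.card_toFinset]
  exact Finset.one_lt_card.mpr ⟨_, Multiset.mem_toFinset.mpr h1, _,
    Multiset.mem_toFinset.mpr h2, by norm_num⟩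

/-- Repeated head/tail breaks on S n performs exactly n - 1 splits
(each pre-split multiset has ≥ 2 distinct values, and after n-1 splits at most 1),
so the ht-index is (n-1) + 1 = n. -/
theorem koch_ht_index_eq_levels (n : ℕ) (hn : 1 ≤ n) :
    (∀ i, i < n - 1 → 2 ≤ ((headOf^[i]) (S n)).dedup.card) ∧
    ((headOf^[n - 1]) (S n)).dedup.card ≤ 1 ∧
    (n - 1) + 1 = n := by
  refine ⟨fun i hi => ?_, ?_, by omega⟩
  · rw [iterate_headOf_S]
    exact two_le_card_dedup_S (by omega)
  · rw [iterate_headOf_S, show n - (n - 1) = 1 by omega, S_one, Multiset.dedup_singleton]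
    rfl
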